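/- In the model setup, for every t ≥ t_0, writing Δ = t − t_0, the membrane potential satisfies m(t) ≤ m_0·exp(−k_m Δ) + Σ_{ν∈N} e_0(ν) b_e(ν)(exp(−k_m Δ) − exp(−k_e(ν)Δ)) + Σ_{μ∈M} i_0(μ) b_i(μ)(exp(−k_m Δ) − exp(−k_i(μ)Δ)); that is, dropping all inhibitory-growth (j) terms gives an upper bound for m(t). -/

import Mathlib

/-!
Put `E k = exp (-k Δ)` and `S k = (E km - E k) / (k - km)`. The inhibitory-growth term of the
`μ`-th synapse factors as `j₀ aᵢ a_j / (k_j - kᵢ) · (S kᵢ - S k_j)`. Since `k ↦ E k` is convex,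
`-S` is the slope of its secants through `km`, which increases with `k`;
so `S kᵢ ≥ S k_j`, and with `j₀ ≤ 0` every such term is nonpositive.
-/

open Real

lemma convexOn_exp_neg_mul (Δ : ℝ) : ConvexOn ℝ Set.univ (fun k : ℝ => exp (-k * Δ)) := by
  simpa [Function.comp_def, mul_comm] using
    convexOn_exp.comp_linearMap (LinearMap.mul ℝ ℝ (-Δ))

lemma exp_neg_mul_secant_anti (Δ c : ℝ) {a b : ℝ} (hac : a ≠ c) (hbc : b ≠ c) (hab : a ≤ b) :
    (exp (-c * Δ) - exp (-b * Δ)) / (b - c) ≤ (exp (-c * Δ) - exp (-a * Δ)) / (a - c) := by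
  have h := (convexOn_exp_neg_mul Δ).secant_mono (Set.mem_univ c) (Set.mem_univ a)
    (Set.mem_univ b) hac hbc hab
  rw [← neg_sub (exp (-c * Δ)), ← neg_sub (exp (-c * Δ)), neg_div, neg_div] at h
  exact neg_le_neg_iff.mp h

lemma inhibitoryGrowth_term_nonpos {km ki kj ai aj j0 : ℝ} (Δ : ℝ) (hkij : ki < kj)
    (hkim : ki ≠ km) (hkjm : kj ≠ km) (hai : 0 ≤ ai) (haj : 0 ≤ aj) (hj0 : j0 ≤ 0) :
    j0 * (ai / (ki - km)) * (aj / (kj - ki)) *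
      ((exp (-km * Δ) - exp (-ki * Δ))
        - ((ki - km) / (kj - km)) * (exp (-km * Δ) - exp (-kj * Δ))) ≤ 0 := by
  have hki : ki - km ≠ 0 := sub_ne_zero.mpr hkim
  have hkj : kj - km ≠ 0 := sub_ne_zero.mpr hkjm
  have factor : j0 * (ai / (ki - km)) * (aj / (kj - ki)) *
      ((exp (-km * Δ) - exp (-ki * Δ))
        - ((ki - km) / (kj - km)) * (exp (-km * Δ) - exp (-kj * Δ)))
      = j0 * (ai * (aj / (kj - ki))) *
        ((exp (-km * Δ) - exp (-ki * Δ)) / (ki - km)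
          - (exp (-km * Δ) - exp (-kj * Δ)) / (kj - km)) := by
    field_simp
  have secant := exp_neg_mul_secant_anti Δ km hkim hkjm hkij.le
  rw [factor]
  exact mul_nonpos_of_nonpos_of_nonneg
    (mul_nonpos_of_nonpos_of_nonneg hj0 (mul_nonneg hai (div_nonneg haj (sub_pos.mpr hkij).le)))
    (sub_nonneg.mpr secant)

theorem stmt_12_general
    (t0 m0 km : ℝ)
    {N M : Type} [Fintype N] [Fintype M]
    (ke ae e0 : N → ℝ)
    (ki kj ai aj i0 j0 : M → ℝ)
    (hkij : ∀ μ, ki μ < kj μ)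
    (hkim : ∀ μ, ki μ ≠ km) (hkjm : ∀ μ, kj μ ≠ km)
    (hai : ∀ μ, 0 < ai μ) (haj : ∀ μ, 0 < aj μ)
    (hj0 : ∀ μ, j0 μ ≤ 0)
    (m : ℝ → ℝ)
    (hm : ∀ t : ℝ, m t =
      m0 * Real.exp (-km * (t - t0))
      + ∑ ν, e0 ν * (ae ν / (ke ν - km)) *
          (Real.exp (-km * (t - t0)) - Real.exp (-ke ν * (t - t0)))
      + ∑ μ, i0 μ * (ai μ / (ki μ - km)) *
          (Real.exp (-km * (t - t0)) - Real.exp (-ki μ * (t - t0)))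
      + ∑ μ, j0 μ * (ai μ / (ki μ - km)) * (aj μ / (kj μ - ki μ)) *
          ((Real.exp (-km * (t - t0)) - Real.exp (-ki μ * (t - t0)))
            - ((ki μ - km) / (kj μ - km)) *
              (Real.exp (-km * (t - t0)) - Real.exp (-kj μ * (t - t0)))))
    (t : ℝ) :
    m t ≤
      m0 * Real.exp (-km * (t - t0))
      + ∑ ν, e0 ν * (ae ν / (ke ν - km)) *
          (Real.exp (-km * (t - t0)) - Real.exp (-ke ν * (t - t0)))
      + ∑ μ, i0 μ * (ai μ / (ki μ - km)) *
          (Real.exp (-km * (t - t0)) - Real.exp (-ki μ * (t - t0))) := by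
  have growth_nonpos := Finset.sum_nonpos fun μ (_ : μ ∈ Finset.univ) =>
    inhibitoryGrowth_term_nonpos (t - t0) (hkij μ) (hkim μ) (hkjm μ) (hai μ).le (haj μ).le (hj0 μ)
  rw [hm t]
  linarith

/-- In the model setup, dropping all inhibitory-growth (j) terms gives an
upper bound for m(t), for every t ≥ t₀. -/
theorem stmt_12
    (t0 m0 km : ℝ) (hkm : 0 < km)
    {N M : Type} [Fintype N] [Fintype M]
    (ke ae e0 : N → ℝ)
    (ki kj ai aj i0 j0 : M → ℝ)
    (hke : ∀ ν, 0 < ke ν) (hkem : ∀ ν, ke ν ≠ km)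
    (hae : ∀ ν, 0 < ae ν) (he0 : ∀ ν, 0 ≤ e0 ν)
    (hki : ∀ μ, 0 < ki μ) (hkij : ∀ μ, ki μ < kj μ)
    (hkim : ∀ μ, ki μ ≠ km) (hkjm : ∀ μ, kj μ ≠ km)
    (hai : ∀ μ, 0 < ai μ) (haj : ∀ μ, 0 < aj μ)
    (hi0 : ∀ μ, i0 μ ≤ 0) (hj0 : ∀ μ, j0 μ ≤ 0)
    (m : ℝ → ℝ)
    (hm : ∀ t : ℝ, m t =
      m0 * Real.exp (-km * (t - t0))
      + ∑ ν, e0 ν * (ae ν / (ke ν - km)) *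
          (Real.exp (-km * (t - t0)) - Real.exp (-ke ν * (t - t0)))
      + ∑ μ, i0 μ * (ai μ / (ki μ - km)) *
          (Real.exp (-km * (t - t0)) - Real.exp (-ki μ * (t - t0)))
      + ∑ μ, j0 μ * (ai μ / (ki μ - km)) * (aj μ / (kj μ - ki μ)) *
          ((Real.exp (-km * (t - t0)) - Real.exp (-ki μ * (t - t0)))
            - ((ki μ - km) / (kj μ - km)) *
              (Real.exp (-km * (t - t0)) - Real.exp (-kj μ * (t - t0)))))
    (t : ℝ) (ht : t0 ≤ t) :
    m t ≤
      m0 * Real.exp (-km * (t - t0))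
      + ∑ ν, e0 ν * (ae ν / (ke ν - km)) *
          (Real.exp (-km * (t - t0)) - Real.exp (-ke ν * (t - t0)))
      + ∑ μ, i0 μ * (ai μ / (ki μ - km)) *
          (Real.exp (-km * (t - t0)) - Real.exp (-ki μ * (t - t0))) :=
  stmt_12_general t0 m0 km ke ae e0 ki kj ai aj i0 j0 hkij hkim hkjm hai haj hj0 m hm t
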